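/- arXiv:2502.02472 — 2 statements merged into one kernel-verified Lean document; each statement's English description precedes it below -/
import Mathlib

section
/- Let n be a natural number and let F : (Fin n → ℝ) × ℝ → (Fin n → ℝ) be such that for every t ∈ ℝ the map ε ↦ F(ε, t) is injective and measurable, and for every ε the map t ↦ F(ε, t) is differentiable. Let G satisfy G(F(ε, t), t) = ε for all ε, t, define f̄(z, t) := (∂/∂t F(ε, t))|_{ε = G(z, t)}, and assume there exists K ≥ 0 such that z ↦ f̄(z, t) is K-Lipschitz for every t ∈ [0, 1]. Suppose for each ε a curve z_ε : ℝ → (Fin n → ℝ) is given with z_ε(0) = F(ε, 0) and with derivative f̄(z_ε(t), t) at every t ∈ [0, 1], and suppose ε ↦ z_ε(t) is measurable for each t. Then for every probability measure ν on Fin n → ℝ and every t ∈ [0, 1], the pushforward of ν under ε ↦ z_ε(t) equals the pushforward of ν under ε ↦ F(ε, t). -/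
open MeasureTheory

/-- The velocity field obtained by differentiating the flow trajectories of `F`
in time and substituting the (left) inverse map `G`:
`f̄(z, t) = (∂/∂t F(ε, t)) |_{ε = G(z, t)}`. -/
noncomputable def velocityField {n : ℕ} (F G : (Fin n → ℝ) × ℝ → (Fin n → ℝ))
    (z : Fin n → ℝ) (t : ℝ) : Fin n → ℝ :=
  deriv (fun s => F (G (z, t), s)) t

/-- Initializing at `z_0 = F(ε, 0)` with `ε ∼ ν` and solving the conditional ODE
`dz_t = f̄(z_t, t) dt` yields latent states whose marginal law at each time
`t ∈ [0, 1]` equals the law of `F(ε, t)` with `ε ∼ ν`. -/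
theorem ode_pushforward_eq_flow_pushforward
    (n : ℕ) (F G : (Fin n → ℝ) × ℝ → (Fin n → ℝ))
    (hinj : ∀ t : ℝ, Function.Injective fun ε => F (ε, t))
    (hmeas : ∀ t : ℝ, Measurable fun ε => F (ε, t))
    (hdiff : ∀ ε : Fin n → ℝ, Differentiable ℝ fun t => F (ε, t))
    (hG : ∀ (ε : Fin n → ℝ) (t : ℝ), G (F (ε, t), t) = ε)
    (hlip : ∃ K : NNReal, ∀ t ∈ Set.Icc (0 : ℝ) 1,
      LipschitzWith K fun z => velocityField F G z t)
    (z : (Fin n → ℝ) → ℝ → (Fin n → ℝ))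
    (hz0 : ∀ ε, z ε 0 = F (ε, 0))
    (hzderiv : ∀ ε, ∀ t ∈ Set.Icc (0 : ℝ) 1,
      HasDerivAt (z ε) (velocityField F G (z ε t) t) t)
    (hzmeas : ∀ t : ℝ, Measurable fun ε => z ε t) :
    ∀ (ν : Measure (Fin n → ℝ)) [IsProbabilityMeasure ν],
      ∀ t ∈ Set.Icc (0 : ℝ) 1,
        Measure.map (fun ε => z ε t) ν = Measure.map (fun ε => F (ε, t)) ν := by
  obtain ⟨K, hK⟩ := hlip
  -- clipped time so velocity field is globally Lipschitz
  set c : ℝ → ℝ := fun t => min (max t 0) 1 with hc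
  have hcmem : ∀ t, c t ∈ Set.Icc (0 : ℝ) 1 := fun t =>
    ⟨le_min (le_max_right _ _) zero_le_one, min_le_right _ _⟩
  have hcid : ∀ t ∈ Set.Icc (0 : ℝ) 1, c t = t := by
    intro t ht
    simp [hc, max_eq_left ht.1, min_eq_left ht.2]
  set v : ℝ → (Fin n → ℝ) → (Fin n → ℝ) := fun t x => velocityField F G x (c t) with hv
  have hvlip : ∀ t, LipschitzWith K (v t) := fun t => hK (c t) (hcmem t)
  have key : ∀ ε, ∀ t ∈ Set.Icc (0 : ℝ) 1, z ε t = F (ε, t) := by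
    intro ε
    have hFd : ∀ t : ℝ, HasDerivAt (fun s => F (ε, s)) (velocityField F G (F (ε, t)) t) t := by
      intro t
      have : velocityField F G (F (ε, t)) t = deriv (fun s => F (ε, s)) t := by
        simp [velocityField, hG]
      rw [this]
      exact (hdiff ε t).hasDerivAt
    have hzc : ContinuousOn (z ε) (Set.Icc 0 1) := fun t ht =>
      ((hzderiv ε t ht).continuousAt).continuousWithinAt
    have hFc : ContinuousOn (fun s => F (ε, s)) (Set.Icc 0 1) :=
      (hdiff ε).continuous.continuousOn
    have heq : Set.EqOn (z ε) (fun s => F (ε, s)) (Set.Icc 0 1) := by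
      apply ODE_solution_unique (v := v) hvlip hzc ?_ hFc ?_ (by simp [hz0])
      · intro t ht
        have h := hzderiv ε t (Set.Ico_subset_Icc_self ht)
        have : v t (z ε t) = velocityField F G (z ε t) t := by
          simp [hv, hcid t (Set.Ico_subset_Icc_self ht)]
        rw [this]
        exact h.hasDerivWithinAt
      · intro t ht
        have : v t (F (ε, t)) = velocityField F G (F (ε, t)) t := by
          simp [hv, hcid t (Set.Ico_subset_Icc_self ht)]
        rw [this]
        exact (hFd t).hasDerivWithinAt
    exact heq
  intro ν _ t ht
  have : (fun ε => z ε t) = fun ε => F (ε, t) := funext fun ε => key ε t ht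
  rw [this]
end

section
/- Let n be a natural number. Let p : (Fin n → ℝ) → ℝ be twice continuously differentiable with p(z) > 0 for all z, let D : (Fin n → ℝ) → Matrix (Fin n) (Fin n) ℝ have twice continuously differentiable entries, and let h : (Fin n → ℝ) → (Fin n → ℝ) be continuously differentiable. Write ∂_i for the partial derivative in the i-th coordinate, define the divergence of a vector field v by ∇·v = Σ_i ∂_i v_i, the row-wise divergence of the matrix field D by (∇·D)_i = Σ_j ∂_j D_{ij}, and (D ∇log p)_i = Σ_j D_{ij} (∂_j p / p). Define the modified drift h̃ := h − (1/2) D ∇log p − (1/2) ∇·D. Then the following identity holds pointwise: ∇·(h̃ · p) = ∇·(h · p) − (1/2) Σ_{i,j} ∂_i ∂_j (D_{ij} · p). -/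
/-- The partial derivative `∂_i f` of a scalar function `f` on `Fin n → ℝ`,
in the `i`-th coordinate direction. -/
noncomputable def pd {n : ℕ} (i : Fin n) (f : (Fin n → ℝ) → ℝ) (z : Fin n → ℝ) : ℝ :=
  fderiv ℝ f z (Pi.single i 1)

/-- The modified (probability-flow) drift
`h̃ = h − (1/2) D ∇log p − (1/2) ∇·D`, where
`(D ∇log p)_i = ∑_j D_{ij} (∂_j p / p)` and `(∇·D)_i = ∑_j ∂_j D_{ij}`. -/
noncomputable def modifiedDrift {n : ℕ}
    (h : (Fin n → ℝ) → (Fin n → ℝ))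
    (D : (Fin n → ℝ) → Matrix (Fin n) (Fin n) ℝ)
    (p : (Fin n → ℝ) → ℝ) (z : Fin n → ℝ) (i : Fin n) : ℝ :=
  h z i - (1 / 2) * (∑ j, D z i j * (pd j p z / p z))
    - (1 / 2) * ∑ j, pd j (fun w => D w i j) z

open Finset

section PartialDerivative

variable {n : ℕ} {i : Fin n} {f g : (Fin n → ℝ) → ℝ} {z : Fin n → ℝ}

lemma pd_sub (hf : DifferentiableAt ℝ f z) (hg : DifferentiableAt ℝ g z) :
    pd i (fun w => f w - g w) z = pd i f z - pd i g z := by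
  simp [pd, fderiv_fun_sub hf hg]

lemma pd_const_mul (c : ℝ) (hg : DifferentiableAt ℝ g z) :
    pd i (fun w => c * g w) z = c * pd i g z := by
  simp [pd, fderiv_const_mul hg c]

lemma pd_mul (hf : DifferentiableAt ℝ f z) (hg : DifferentiableAt ℝ g z) :
    pd i (fun w => f w * g w) z = pd i f z * g z + f z * pd i g z := by
  simp only [pd, fderiv_fun_mul hf hg, add_apply, smul_apply, smul_eq_mul]
  ring

lemma pd_sum {ι : Type*} [Fintype ι] {F : ι → (Fin n → ℝ) → ℝ}
    (hF : ∀ j, DifferentiableAt ℝ (F j) z) :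
    pd i (fun w => ∑ j, F j w) z = ∑ j, pd i (F j) z := by
  simp [pd, fderiv_fun_sum fun j _ => hF j]

lemma ContDiff.pd {m : WithTop ℕ∞} (hf : ContDiff ℝ (m + 1) f) : ContDiff ℝ m (pd i f) :=
  (hf.fderiv_right le_rfl).clm_apply contDiff_const

end PartialDerivative

/-- Multiplying the modified drift by `p` cancels the `1 / p` of `∇ log p`, and the product rule
merges the two correction terms into a single divergence. -/
lemma mul_modifiedDrift_eq {n : ℕ} (h : (Fin n → ℝ) → (Fin n → ℝ))
    (D : (Fin n → ℝ) → Matrix (Fin n) (Fin n) ℝ) {p : (Fin n → ℝ) → ℝ} {w : Fin n → ℝ}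
    (i : Fin n) (hp : DifferentiableAt ℝ p w) (hpw : p w ≠ 0)
    (hD : ∀ j, DifferentiableAt ℝ (fun u => D u i j) w) :
    p w * modifiedDrift h D p w i =
      p w * h w i - (1 / 2) * ∑ j, pd j (fun u => D u i j * p u) w := by
  have hdiv : ∑ j, pd j (fun u => D u i j * p u) w =
      (∑ j, pd j (fun u => D u i j) w) * p w + ∑ j, D w i j * pd j p w := by
    rw [sum_mul, ← sum_add_distrib]
    exact sum_congr rfl fun j _ => pd_mul (hD j) hp
  have hlog : ∑ j, D w i j * (pd j p w / p w) = (∑ j, D w i j * pd j p w) / p w := by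
    simp only [sum_div, mul_div_assoc]
  rw [modifiedDrift, hdiv, hlog]
  field_simp
  ring

/-- Analytic core of the SDE / probability-flow-ODE equivalence:
`∇·(h̃ p) = ∇·(h p) − (1/2) ∑_{i,j} ∂_i ∂_j (D_{ij} p)` pointwise, where
`h̃ = h − (1/2) D ∇log p − (1/2) ∇·D`. -/
theorem div_modifiedDrift_eq
    (n : ℕ) (p : (Fin n → ℝ) → ℝ) (D : (Fin n → ℝ) → Matrix (Fin n) (Fin n) ℝ)
    (h : (Fin n → ℝ) → (Fin n → ℝ))
    (hp : ContDiff ℝ 2 p) (hppos : ∀ z, 0 < p z)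
    (hD : ∀ i j : Fin n, ContDiff ℝ 2 fun z => D z i j)
    (hh : ContDiff ℝ 1 h) :
    ∀ z : Fin n → ℝ,
      (∑ i, pd i (fun w => p w * modifiedDrift h D p w i) z) =
        (∑ i, pd i (fun w => p w * h w i) z) -
          (1 / 2) * ∑ i, ∑ j, pd i (fun w => pd j (fun u => D u i j * p u) w) z := by
  intro z
  have hp' : Differentiable ℝ p := hp.differentiable two_ne_zero
  have hph : ∀ i, Differentiable ℝ fun w => p w * h w i := fun i =>
    hp'.mul ((contDiff_pi.mp hh i).differentiable one_ne_zero)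
  have hdivD : ∀ i j, Differentiable ℝ (pd j fun u => D u i j * p u) := fun i j =>
    (ContDiff.pd ((hD i j).mul hp)).differentiable one_ne_zero
  have hsum : ∀ i, Differentiable ℝ fun w => ∑ j, pd j (fun u => D u i j * p u) w := fun i =>
    Differentiable.fun_sum fun j _ => hdivD i j
  calc ∑ i, pd i (fun w => p w * modifiedDrift h D p w i) z
      = ∑ i, pd i (fun w => p w * h w i - (1 / 2) * ∑ j, pd j (fun u => D u i j * p u) w) z := by
        refine sum_congr rfl fun i _ => congrArg (pd i · z) (funext fun w => ?_)
        exact mul_modifiedDrift_eq h D i (hp' w) (hppos w).ne'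
          fun j => (hD i j).differentiable two_ne_zero w
    _ = ∑ i, (pd i (fun w => p w * h w i) z -
          (1 / 2) * ∑ j, pd i (fun w => pd j (fun u => D u i j * p u) w) z) := by
        refine sum_congr rfl fun i _ => ?_
        rw [pd_sub (hph i z) ((hsum i z).const_mul _), pd_const_mul _ (hsum i z),
          pd_sum fun j => hdivD i j z]
    _ = _ := by rw [sum_sub_distrib, ← mul_sum]
end
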